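/- Let (A₀, A₁) be a compatible couple of Banach spaces and let x = (x_i) be a finitely supported sequence of elements of A₀ + A₁. Then for every t > 0, K_t(x; ℓ₁(A₀), ℓ_∞(A₁)) = sup { Σ_i K_{t_i}(x_i; A₀, A₁) : t_i ≥ 0, Σ_i t_i ≤ t }. -/

import Mathlib

open MeasureTheory ENNReal Set Filter

/-- The Peetre `K_t`-functional of a compatible couple `(A₀, A₁)` of spaces
continuously embedded (via `j₀, j₁`) in a common topological vector space `V`. -/
noncomputable def Kfun {V A₀ A₁ : Type*} [AddCommGroup V] [Module ℝ V]
    [NormedAddCommGroup A₀] [NormedSpace ℝ A₀] [NormedAddCommGroup A₁] [NormedSpace ℝ A₁]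
    (j₀ : A₀ →ₗ[ℝ] V) (j₁ : A₁ →ₗ[ℝ] V) (t : ℝ) (v : V) : ℝ :=
  sInf {r | ∃ (a : A₀) (b : A₁), v = j₀ a + j₁ b ∧ r = ‖a‖ + t * ‖b‖}

/-- The `K_t`-functional of the couple `(ℓ₁(A₀), ℓ_∞(A₁))`, viewed inside the space
of `V`-valued sequences. -/
noncomputable def Kl1linf {V A₀ A₁ : Type*} [AddCommGroup V] [Module ℝ V]
    [NormedAddCommGroup A₀] [NormedSpace ℝ A₀] [NormedAddCommGroup A₁] [NormedSpace ℝ A₁]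
    (j₀ : A₀ →ₗ[ℝ] V) (j₁ : A₁ →ₗ[ℝ] V) (t : ℝ) (x : ℕ → V) : ℝ :=
  sInf {r | ∃ (a : ℕ → A₀) (b : ℕ → A₁), Summable (fun i => ‖a i‖) ∧
      BddAbove (Set.range fun i => ‖b i‖) ∧ (∀ i, x i = j₀ (a i) + j₁ (b i)) ∧
      r = (∑' i, ‖a i‖) + t * (⨆ i, ‖b i‖)}

/-- Membership in `ℓ₁(A₀) + ℓ_∞(A₁)` (as `V`-valued sequences). -/
def MemSumSeq {V A₀ A₁ : Type*} [AddCommGroup V] [Module ℝ V]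
    [NormedAddCommGroup A₀] [NormedSpace ℝ A₀] [NormedAddCommGroup A₁] [NormedSpace ℝ A₁]
    (j₀ : A₀ →ₗ[ℝ] V) (j₁ : A₁ →ₗ[ℝ] V) (x : ℕ → V) : Prop :=
  ∃ (a : ℕ → A₀) (b : ℕ → A₁), Summable (fun i => ‖a i‖) ∧
    BddAbove (Set.range fun i => ‖b i‖) ∧ ∀ i, x i = j₀ (a i) + j₁ (b i)

/-- `sup { Σᵢ K_{tᵢ}(xᵢ) : tᵢ ≥ 0, Σ tᵢ ≤ t }`. -/
noncomputable def KsupSum {V A₀ A₁ : Type*} [AddCommGroup V] [Module ℝ V]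
    [NormedAddCommGroup A₀] [NormedSpace ℝ A₀] [NormedAddCommGroup A₁] [NormedSpace ℝ A₁]
    (j₀ : A₀ →ₗ[ℝ] V) (j₁ : A₁ →ₗ[ℝ] V) (t : ℝ) (x : ℕ → V) : ℝ :=
  sSup {s | ∃ τ : ℕ → ℝ, (∀ i, 0 ≤ τ i) ∧ Summable τ ∧ (∑' i, τ i) ≤ t ∧
      Summable (fun i => Kfun j₀ j₁ (τ i) (x i)) ∧ s = ∑' i, Kfun j₀ j₁ (τ i) (x i)}

/-! Let `F` be the support of `x`. For decompositions `xᵢ = aᵢ + bᵢ` supported in `F` and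
weights `τ ≥ 0` supported in `F` with `∑ τᵢ ≤ t`, put `L(τ, a, b) = ∑_{i ∈ F} (‖aᵢ‖ + τᵢ ‖bᵢ‖)`.
The supremum of `L` over the weights is `∑ ‖aᵢ‖ + t · supᵢ ‖bᵢ‖`, attained at a point mass, and
its infimum over the decompositions is `K_t(x; ℓ₁(A₀), ℓ_∞(A₁))` (cutting a decomposition of `x`
down to `F` only lowers its cost). Since the coordinates decouple, the infimum of `L` over the
decompositions is `∑ K_{τᵢ}(xᵢ; A₀, A₁)`, and the supremum of these sums over the weights is the
right-hand side. As `L` is affine in `τ`, convex in `(a, b)`, and the weights form a compact convex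
set, Sion's minimax theorem exchanges the infimum and the supremum. -/

/-- `Sion.minimax` read in `ℝᵒᵈ`, which puts the compact set on the side of the supremum. -/
theorem minimax_real {E F : Type*} [TopologicalSpace E] [AddCommGroup E] [Module ℝ E]
    [IsTopologicalAddGroup E] [ContinuousSMul ℝ E]
    [TopologicalSpace F] [AddCommGroup F] [Module ℝ F]
    [IsTopologicalAddGroup F] [ContinuousSMul ℝ F]
    {X : Set E} {Y : Set F} {f : E → F → ℝ}
    (ne_X : X.Nonempty) (cX : Convex ℝ X) (kX : IsCompact X) (cY : Convex ℝ Y)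
    (hfy : ∀ y ∈ Y, UpperSemicontinuousOn (f · y) X)
    (hfy' : ∀ y ∈ Y, QuasiconcaveOn ℝ X (f · y))
    (hfx : ∀ x ∈ X, LowerSemicontinuousOn (f x) Y)
    (hfx' : ∀ x ∈ X, QuasiconvexOn ℝ Y (f x))
    {g : E → ℝ} (hg : ∀ x ∈ X, IsGLB {f x y | y ∈ Y} (g x)) {S : ℝ} (hS : IsLUB (g '' X) S)
    {h : F → ℝ} (hh : ∀ y ∈ Y, IsLUB {f x y | x ∈ X} (h y)) {I : ℝ} (hI : IsGLB (h '' Y) I) :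
    S = I :=
  Sion.minimax (β := ℝᵒᵈ) (f := fun x y => OrderDual.toDual (f x y)) ne_X kX hfy
    (fun y hy r => hfy' y hy (OrderDual.ofDual r)) cY hfx
    (fun x hx r => hfx' x hx (OrderDual.ofDual r)) cX _ hg _ hS _ hh _ hI

theorem bddAbove_range_of_eq_zero_of_notMem {ι : Type*} {F : Finset ι} {f : ι → ℝ}
    (hf : ∀ i ∉ F, f i = 0) : BddAbove (range f) := by
  refine ((F.finite_toSet.image f).insert 0).bddAbove.mono ?_
  rintro _ ⟨i, rfl⟩
  by_cases hi : i ∈ F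
  · exact Or.inr ⟨i, hi, rfl⟩
  · exact Or.inl (hf i hi)

section KFunctional

variable {V A₀ A₁ : Type*} [AddCommGroup V] [Module ℝ V]
  [NormedAddCommGroup A₀] [NormedSpace ℝ A₀] [NormedAddCommGroup A₁] [NormedSpace ℝ A₁]
  {j₀ : A₀ →ₗ[ℝ] V} {j₁ : A₁ →ₗ[ℝ] V} {t : ℝ} {v : V}

theorem Kfun_nonneg (ht : 0 ≤ t) : 0 ≤ Kfun j₀ j₁ t v := by
  refine Real.sInf_nonneg ?_
  rintro r ⟨a, b, -, rfl⟩
  positivity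

theorem Kfun_le (ht : 0 ≤ t) {a : A₀} {b : A₁} (h : v = j₀ a + j₁ b) :
    Kfun j₀ j₁ t v ≤ ‖a‖ + t * ‖b‖ := by
  refine csInf_le ⟨0, ?_⟩ ⟨a, b, h, rfl⟩
  rintro r ⟨a', b', -, rfl⟩
  positivity

theorem Kfun_zero (ht : 0 ≤ t) : Kfun j₀ j₁ t (0 : V) = 0 :=
  le_antisymm (by simpa using Kfun_le (j₀ := j₀) (j₁ := j₁) ht (a := 0) (b := 0) (by simp))
    (Kfun_nonneg ht)

theorem exists_decomposition_lt_Kfun_add (hv : v ∈ LinearMap.range j₀ ⊔ LinearMap.range j₁)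
    {ε : ℝ} (hε : 0 < ε) :
    ∃ (a : A₀) (b : A₁), v = j₀ a + j₁ b ∧ ‖a‖ + t * ‖b‖ < Kfun j₀ j₁ t v + ε := by
  obtain ⟨_, ⟨a, rfl⟩, _, ⟨b, rfl⟩, hab⟩ := Submodule.mem_sup.mp hv
  obtain ⟨_, ⟨a', b', h, rfl⟩, hlt⟩ :=
    exists_lt_of_csInf_lt (s := {r | ∃ (a : A₀) (b : A₁), v = j₀ a + j₁ b ∧ r = ‖a‖ + t * ‖b‖})
      ⟨_, a, b, hab.symm, rfl⟩ (lt_add_of_pos_right (Kfun j₀ j₁ t v) hε)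
  exact ⟨a', b', h, hlt⟩

end KFunctional

section Weights

variable {ι : Type*} {F : Finset ι} {t : ℝ}

def weightsSupportedIn (F : Finset ι) (t : ℝ) : Set (ι → ℝ) :=
  {τ | (∀ i, 0 ≤ τ i) ∧ (∀ i ∉ F, τ i = 0) ∧ ∑ i ∈ F, τ i ≤ t}

theorem zero_mem_weightsSupportedIn (ht : 0 ≤ t) : (0 : ι → ℝ) ∈ weightsSupportedIn F t :=
  ⟨fun _ => le_rfl, fun _ _ => rfl, by simpa using ht⟩

theorem convex_weightsSupportedIn : Convex ℝ (weightsSupportedIn F t) := by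
  rintro τ ⟨hτ₀, hτF, hτt⟩ σ ⟨hσ₀, hσF, hσt⟩ a b ha hb hab
  refine ⟨fun i => ?_, fun i hi => ?_, ?_⟩
  · simp only [Pi.add_apply, Pi.smul_apply, smul_eq_mul]
    exact add_nonneg (mul_nonneg ha (hτ₀ i)) (mul_nonneg hb (hσ₀ i))
  · simp [hτF i hi, hσF i hi]
  · simp only [Pi.add_apply, Pi.smul_apply, smul_eq_mul, Finset.sum_add_distrib,
      ← Finset.mul_sum]
    calc a * ∑ i ∈ F, τ i + b * ∑ i ∈ F, σ i ≤ a * t + b * t := by gcongr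
      _ = t := by rw [← add_mul, hab, one_mul]

theorem isClosed_weightsSupportedIn : IsClosed (weightsSupportedIn F t) := by
  have : weightsSupportedIn F t =
      (⋂ i, {τ | 0 ≤ τ i}) ∩ (⋂ i ∉ F, {τ | τ i = 0}) ∩ {τ | ∑ i ∈ F, τ i ≤ t} := by
    ext; simp [weightsSupportedIn, and_assoc]
  rw [this]
  exact ((isClosed_iInter fun i => isClosed_le continuous_const (continuous_apply i)).inter
    (isClosed_biInter fun i _ => isClosed_eq (continuous_apply i) continuous_const)).inter
    (isClosed_le (continuous_finsetSum _ fun i _ => continuous_apply i) continuous_const)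

theorem weightsSupportedIn_subset_Icc :
    weightsSupportedIn F t ⊆ Set.pi univ fun _ => Icc 0 t := by
  rintro τ ⟨hτ₀, hτF, hτt⟩ i -
  refine ⟨hτ₀ i, le_trans ?_ hτt⟩
  by_cases hi : i ∈ F
  · exact Finset.single_le_sum (fun j _ => hτ₀ j) hi
  · exact (hτF i hi).trans_le (Finset.sum_nonneg fun j _ => hτ₀ j)

theorem isCompact_weightsSupportedIn : IsCompact (weightsSupportedIn F t) :=
  (isCompact_univ_pi fun _ => isCompact_Icc).of_isClosed_subset isClosed_weightsSupportedIn
    weightsSupportedIn_subset_Icc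

end Weights

section Lagrangian

variable {ι A₀ A₁ : Type*} [NormedAddCommGroup A₀] [NormedAddCommGroup A₁] {F : Finset ι}
  {t : ℝ}

def lagrangian (F : Finset ι) (τ : ι → ℝ) (p : (ι → A₀) × (ι → A₁)) : ℝ :=
  ∑ i ∈ F, (‖p.1 i‖ + τ i * ‖p.2 i‖)

theorem continuous_lagrangian_weights (p : (ι → A₀) × (ι → A₁)) :
    Continuous fun τ => lagrangian F τ p := by
  unfold lagrangian; fun_prop

theorem continuous_lagrangian (τ : ι → ℝ) :
    Continuous (lagrangian (A₀ := A₀) (A₁ := A₁) F τ) := by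
  unfold lagrangian; fun_prop

theorem concaveOn_lagrangian_weights (p : (ι → A₀) × (ι → A₁)) :
    ConcaveOn ℝ univ fun τ => lagrangian F τ p := by
  refine ⟨convex_univ, fun τ _ σ _ a b _ _ hab => le_of_eq ?_⟩
  simp only [lagrangian, Pi.add_apply, Pi.smul_apply, smul_eq_mul, Finset.mul_sum,
    ← Finset.sum_add_distrib]
  refine Finset.sum_congr rfl fun i _ => ?_
  linear_combination ‖p.1 i‖ * hab

theorem convexOn_lagrangian [NormedSpace ℝ A₀] [NormedSpace ℝ A₁] {τ : ι → ℝ}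
    (hτ : ∀ i, 0 ≤ τ i) : ConvexOn ℝ univ (lagrangian (A₀ := A₀) (A₁ := A₁) F τ) := by
  refine ⟨convex_univ, fun p _ q _ a b ha hb hab => ?_⟩
  simp only [lagrangian, smul_eq_mul, Finset.mul_sum, ← Finset.sum_add_distrib]
  refine Finset.sum_le_sum fun i _ => ?_
  have h₀ := norm_add_le (a • p.1 i) (b • q.1 i)
  have h₁ := norm_add_le (a • p.2 i) (b • q.2 i)
  simp only [norm_smul, Real.norm_of_nonneg ha, Real.norm_of_nonneg hb] at h₀ h₁
  simp only [Prod.fst_add, Prod.snd_add, Prod.smul_fst, Prod.smul_snd, Pi.add_apply,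
    Pi.smul_apply]
  nlinarith [mul_le_mul_of_nonneg_left h₁ (hτ i)]

theorem isLUB_lagrangian_weightsSupportedIn (ht : 0 ≤ t) {p : (ι → A₀) × (ι → A₁)}
    (hpF : ∀ i ∉ F, p.1 i = 0 ∧ p.2 i = 0) :
    IsLUB {lagrangian F τ p | τ ∈ weightsSupportedIn F t}
      ((∑' i, ‖p.1 i‖) + t * ⨆ i, ‖p.2 i‖) := by
  classical
  have hb : ∀ i ∉ F, ‖p.2 i‖ = 0 := fun i hi => by simp [(hpF i hi).2]
  rw [tsum_eq_sum (s := F) fun i hi => by simp [(hpF i hi).1]]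
  refine ⟨?_, fun c hc => ?_⟩
  · rintro _ ⟨τ, ⟨hτ₀, -, hτt⟩, rfl⟩
    have hM : 0 ≤ ⨆ i, ‖p.2 i‖ := Real.iSup_nonneg fun i => norm_nonneg _
    calc lagrangian F τ p = ∑ i ∈ F, ‖p.1 i‖ + ∑ i ∈ F, τ i * ‖p.2 i‖ := Finset.sum_add_distrib
      _ ≤ ∑ i ∈ F, ‖p.1 i‖ + ∑ i ∈ F, τ i * ⨆ j, ‖p.2 j‖ := by
        gcongr with i
        · exact hτ₀ i
        · exact le_ciSup (bddAbove_range_of_eq_zero_of_notMem hb) i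
      _ ≤ ∑ i ∈ F, ‖p.1 i‖ + t * ⨆ j, ‖p.2 j‖ := by rw [← Finset.sum_mul]; gcongr
  · have h₀ : ∑ i ∈ F, ‖p.1 i‖ ≤ c := by
      simpa [lagrangian] using hc ⟨0, zero_mem_weightsSupportedIn ht, rfl⟩
    rw [Real.mul_iSup_of_nonneg ht, ← le_sub_iff_add_le']
    refine Real.iSup_le (fun i => le_sub_iff_add_le'.mpr ?_) (sub_nonneg.mpr h₀)
    by_cases hi : i ∈ F
    · have hτ : (fun j => if j = i then t else 0) ∈ weightsSupportedIn F t :=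
        ⟨fun _ => ite_nonneg ht le_rfl, fun j hj => if_neg (ne_of_mem_of_not_mem hi hj).symm,
          by simp [hi]⟩
      simpa [lagrangian, Finset.sum_add_distrib, ite_mul, hi] using hc ⟨_, hτ, rfl⟩
    · simpa [hb i hi] using h₀

end Lagrangian

section Decompositions

variable {ι V A₀ A₁ : Type*} [AddCommGroup V] [Module ℝ V]
  [NormedAddCommGroup A₀] [NormedSpace ℝ A₀] [NormedAddCommGroup A₁] [NormedSpace ℝ A₁]
  {j₀ : A₀ →ₗ[ℝ] V} {j₁ : A₁ →ₗ[ℝ] V} {F : Finset ι} {x : ι → V}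

variable (j₀ j₁) in
def decompositionsSupportedIn (F : Finset ι) (x : ι → V) : Set ((ι → A₀) × (ι → A₁)) :=
  {p | (∀ i, x i = j₀ (p.1 i) + j₁ (p.2 i)) ∧ ∀ i ∉ F, p.1 i = 0 ∧ p.2 i = 0}

theorem convex_decompositionsSupportedIn : Convex ℝ (decompositionsSupportedIn j₀ j₁ F x) := by
  rintro p ⟨hp, hpF⟩ q ⟨hq, hqF⟩ a b - - hab
  refine ⟨fun i => ?_, fun i hi => ?_⟩
  · simp only [Prod.fst_add, Prod.snd_add, Prod.smul_fst, Prod.smul_snd, Pi.add_apply,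
      Pi.smul_apply, map_add, map_smul]
    linear_combination (norm := module) a • hp i + b • hq i - hab • x i
  · simp [(hpF i hi).1, (hpF i hi).2, (hqF i hi).1, (hqF i hi).2]

theorem exists_mem_decompositionsSupportedIn_lagrangian_le
    (hx : ∀ i ∈ F, x i ∈ LinearMap.range j₀ ⊔ LinearMap.range j₁) (hxF : ∀ i ∉ F, x i = 0)
    (τ : ι → ℝ) {ε : ℝ} (hε : 0 < ε) :
    ∃ p ∈ decompositionsSupportedIn j₀ j₁ F x,
      lagrangian F τ p ≤ ∑ i ∈ F, Kfun j₀ j₁ (τ i) (x i) + ε := by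
  classical
  set δ := ε / (F.card + 1)
  have hδ : 0 < δ := by positivity
  have hq : ∀ i ∈ F, ∃ q : A₀ × A₁, x i = j₀ q.1 + j₁ q.2 ∧
      ‖q.1‖ + τ i * ‖q.2‖ < Kfun j₀ j₁ (τ i) (x i) + δ := fun i hi => by
    obtain ⟨a, b, h⟩ := exists_decomposition_lt_Kfun_add (hx i hi) hδ
    exact ⟨(a, b), h⟩
  choose! q hq using hq
  refine ⟨((F : Set ι).indicator fun i => (q i).1, (F : Set ι).indicator fun i => (q i).2),
    ⟨fun i => ?_, fun i hi => by simp [hi]⟩, ?_⟩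
  · by_cases hi : i ∈ F
    · simpa [hi] using (hq i hi).1
    · simp [hi, hxF i hi]
  calc lagrangian F τ _ = ∑ i ∈ F, (‖(q i).1‖ + τ i * ‖(q i).2‖) :=
        Finset.sum_congr rfl fun i hi => by simp [hi]
    _ ≤ ∑ i ∈ F, (Kfun j₀ j₁ (τ i) (x i) + δ) := Finset.sum_le_sum fun i hi => (hq i hi).2.le
    _ = ∑ i ∈ F, Kfun j₀ j₁ (τ i) (x i) + F.card * δ := by
        rw [Finset.sum_add_distrib, Finset.sum_const, nsmul_eq_mul]
    _ ≤ ∑ i ∈ F, Kfun j₀ j₁ (τ i) (x i) + ε := by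
        gcongr
        rw [mul_div_assoc', div_le_iff₀ (by positivity)]
        linarith

theorem isGLB_lagrangian_decompositionsSupportedIn {τ : ι → ℝ} (hτ : ∀ i, 0 ≤ τ i)
    (hx : ∀ i ∈ F, x i ∈ LinearMap.range j₀ ⊔ LinearMap.range j₁) (hxF : ∀ i ∉ F, x i = 0) :
    IsGLB {lagrangian F τ p | p ∈ decompositionsSupportedIn j₀ j₁ F x}
      (∑ i ∈ F, Kfun j₀ j₁ (τ i) (x i)) := by
  refine ⟨?_, fun c hc => le_of_forall_pos_le_add fun ε hε => ?_⟩
  · rintro _ ⟨p, hp, rfl⟩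
    exact Finset.sum_le_sum fun i _ => Kfun_le (hτ i) (hp.1 i)
  · obtain ⟨p, hp, hle⟩ := exists_mem_decompositionsSupportedIn_lagrangian_le hx hxF τ hε
    exact (hc ⟨p, hp, rfl⟩).trans hle

end Decompositions

section Sequences

variable {V A₀ A₁ : Type*} [AddCommGroup V] [Module ℝ V]
  [NormedAddCommGroup A₀] [NormedSpace ℝ A₀] [NormedAddCommGroup A₁] [NormedSpace ℝ A₁]
  {j₀ : A₀ →ₗ[ℝ] V} {j₁ : A₁ →ₗ[ℝ] V} {F : Finset ℕ} {x : ℕ → V} {t : ℝ}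

theorem isLUB_KsupSum (ht : 0 ≤ t) (hxF : ∀ i ∉ F, x i = 0)
    (hbdd : BddAbove ((fun τ => ∑ i ∈ F, Kfun j₀ j₁ (τ i) (x i)) '' weightsSupportedIn F t)) :
    IsLUB ((fun τ => ∑ i ∈ F, Kfun j₀ j₁ (τ i) (x i)) '' weightsSupportedIn F t)
      (KsupSum j₀ j₁ t x) := by
  have hK : ∀ τ : ℕ → ℝ, (∀ i, 0 ≤ τ i) → ∀ i ∉ F, Kfun j₀ j₁ (τ i) (x i) = 0 :=
    fun τ hτ i hi => by rw [hxF i hi, Kfun_zero (hτ i)]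
  suffices hset : {s | ∃ τ : ℕ → ℝ, (∀ i, 0 ≤ τ i) ∧ Summable τ ∧ (∑' i, τ i) ≤ t ∧
      Summable (fun i => Kfun j₀ j₁ (τ i) (x i)) ∧ s = ∑' i, Kfun j₀ j₁ (τ i) (x i)} =
      (fun τ => ∑ i ∈ F, Kfun j₀ j₁ (τ i) (x i)) '' weightsSupportedIn F t by
    rw [KsupSum, hset]
    exact isLUB_csSup ⟨_, mem_image_of_mem _ (zero_mem_weightsSupportedIn ht)⟩ hbdd
  ext s
  constructor
  · rintro ⟨τ, hτ₀, hτ, hτt, -, rfl⟩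
    refine ⟨(F : Set ℕ).indicator τ, ⟨fun i => indicator_nonneg (fun j _ => hτ₀ j) i,
      fun i hi => by simp [hi], ?_⟩, ?_⟩
    · calc ∑ i ∈ F, (F : Set ℕ).indicator τ i = ∑ i ∈ F, τ i :=
            Finset.sum_congr rfl fun i hi => by simp [hi]
        _ ≤ ∑' i, τ i := hτ.sum_le_tsum F fun i _ => hτ₀ i
        _ ≤ t := hτt
    · rw [tsum_eq_sum (hK τ hτ₀)]
      exact Finset.sum_congr rfl fun i hi => by simp [hi]
  · rintro ⟨τ, ⟨hτ₀, hτF, hτt⟩, rfl⟩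
    exact ⟨τ, hτ₀, summable_of_ne_finset_zero hτF, by rwa [tsum_eq_sum hτF],
      summable_of_ne_finset_zero (hK τ hτ₀), (tsum_eq_sum (hK τ hτ₀)).symm⟩

theorem isGLB_Kl1linf (ht : 0 ≤ t) (hxF : ∀ i ∉ F, x i = 0)
    (hne : (decompositionsSupportedIn j₀ j₁ F x).Nonempty) :
    IsGLB ((fun p => (∑' i, ‖p.1 i‖) + t * ⨆ i, ‖p.2 i‖) '' decompositionsSupportedIn j₀ j₁ F x)
      (Kl1linf j₀ j₁ t x) := by
  set KS := {r | ∃ (a : ℕ → A₀) (b : ℕ → A₁), Summable (fun i => ‖a i‖) ∧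
      BddAbove (Set.range fun i => ‖b i‖) ∧ (∀ i, x i = j₀ (a i) + j₁ (b i)) ∧
      r = (∑' i, ‖a i‖) + t * (⨆ i, ‖b i‖)}
  have hmem : ∀ p ∈ decompositionsSupportedIn j₀ j₁ F x,
      (∑' i, ‖p.1 i‖) + t * ⨆ i, ‖p.2 i‖ ∈ KS := fun p ⟨hp, hpF⟩ =>
    ⟨p.1, p.2, summable_of_ne_finset_zero (s := F) fun i hi => by simp [(hpF i hi).1],
      bddAbove_range_of_eq_zero_of_notMem (F := F) fun i hi => by simp [(hpF i hi).2], hp, rfl⟩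
  have hbdd : BddBelow KS := by
    refine ⟨0, ?_⟩
    rintro _ ⟨a, b, -, -, -, rfl⟩
    exact add_nonneg (tsum_nonneg fun i => norm_nonneg _)
      (mul_nonneg ht (Real.iSup_nonneg fun i => norm_nonneg _))
  have hrestrict : ∀ r ∈ KS, ∃ p ∈ decompositionsSupportedIn j₀ j₁ F x,
      (∑' i, ‖p.1 i‖) + t * ⨆ i, ‖p.2 i‖ ≤ r := by
    rintro _ ⟨a, b, ha, hb, hab, rfl⟩
    refine ⟨((F : Set ℕ).indicator a, (F : Set ℕ).indicator b),
      ⟨fun i => ?_, fun i hi => by simp [hi]⟩, ?_⟩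
    · by_cases hi : i ∈ F
      · simpa [hi] using hab i
      · simp [hi, hxF i hi]
    · gcongr ?_ + t * ?_
      · exact Summable.tsum_le_tsum (fun i => norm_indicator_le_norm_self a i)
          (summable_of_ne_finset_zero (s := F) fun i hi => by simp [hi]) ha
      · exact ciSup_mono hb fun i => norm_indicator_le_norm_self b i
  refine ⟨?_, fun c hc => ?_⟩
  · rintro _ ⟨p, hp, rfl⟩
    exact csInf_le hbdd (hmem p hp)
  · obtain ⟨p, hp⟩ := hne
    refine le_csInf ⟨_, hmem p hp⟩ fun r hr => ?_
    obtain ⟨q, hq, hle⟩ := hrestrict r hr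
    exact (hc ⟨q, hq, rfl⟩).trans hle

end Sequences

theorem Kl1linf_eq_KsupSum_of_finiteSupport_general
    {V A₀ A₁ : Type*} [AddCommGroup V] [Module ℝ V]
    [NormedAddCommGroup A₀] [NormedSpace ℝ A₀]
    [NormedAddCommGroup A₁] [NormedSpace ℝ A₁]
    (j₀ : A₀ →ₗ[ℝ] V) (j₁ : A₁ →ₗ[ℝ] V)
    (x : ℕ → V) (hx : ∀ i, x i ∈ LinearMap.range j₀ ⊔ LinearMap.range j₁)
    (hfin : Set.Finite {i | x i ≠ 0}) (t : ℝ) (ht : 0 < t) :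
    Kl1linf j₀ j₁ t x = KsupSum j₀ j₁ t x := by
  set F := hfin.toFinset
  have hxF : ∀ i ∉ F, x i = 0 := fun i hi => by simpa [F] using hi
  obtain ⟨p₀, hp₀, -⟩ :=
    exists_mem_decompositionsSupportedIn_lagrangian_le (fun i _ => hx i) hxF 0 one_pos
  have hinf := fun τ (hτ : τ ∈ weightsSupportedIn F t) =>
    isGLB_lagrangian_decompositionsSupportedIn (j₀ := j₀) (j₁ := j₁) hτ.1 (fun i _ => hx i) hxF
  have hsup := fun p (hp : p ∈ decompositionsSupportedIn j₀ j₁ F x) =>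
    isLUB_lagrangian_weightsSupportedIn ht.le hp.2
  have hweak : BddAbove ((fun τ => ∑ i ∈ F, Kfun j₀ j₁ (τ i) (x i)) '' weightsSupportedIn F t) :=
    ⟨_, forall_mem_image.2 fun τ hτ =>
      ((hinf τ hτ).1 ⟨p₀, hp₀, rfl⟩).trans ((hsup p₀ hp₀).1 ⟨τ, hτ, rfl⟩)⟩
  exact (minimax_real ⟨0, zero_mem_weightsSupportedIn ht.le⟩ convex_weightsSupportedIn
    isCompact_weightsSupportedIn convex_decompositionsSupportedIn
    (fun p _ => (continuous_lagrangian_weights p).upperSemicontinuous.upperSemicontinuousOn _)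
    (fun p _ => ((concaveOn_lagrangian_weights p).subset (subset_univ _)
      convex_weightsSupportedIn).quasiconcaveOn)
    (fun τ _ => (continuous_lagrangian τ).lowerSemicontinuous.lowerSemicontinuousOn _)
    (fun τ hτ => ((convexOn_lagrangian hτ.1).subset (subset_univ _)
      convex_decompositionsSupportedIn).quasiconvexOn)
    hinf (isLUB_KsupSum ht.le hxF hweak) hsup (isGLB_Kl1linf ht.le hxF ⟨p₀, hp₀⟩)).symm

/-- Theorem 1: for finitely supported `x`,
`K_t(x; ℓ₁(A₀), ℓ_∞(A₁)) = sup { Σᵢ K_{tᵢ}(xᵢ; A₀, A₁) : tᵢ ≥ 0, Σ tᵢ ≤ t }`. -/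
theorem Kl1linf_eq_KsupSum_of_finiteSupport
    {V A₀ A₁ : Type*} [AddCommGroup V] [Module ℝ V] [TopologicalSpace V]
    [IsTopologicalAddGroup V] [ContinuousSMul ℝ V] [T2Space V]
    [NormedAddCommGroup A₀] [NormedSpace ℝ A₀] [CompleteSpace A₀]
    [NormedAddCommGroup A₁] [NormedSpace ℝ A₁] [CompleteSpace A₁]
    (j₀ : A₀ →ₗ[ℝ] V) (j₁ : A₁ →ₗ[ℝ] V)
    (hc₀ : Continuous j₀) (hc₁ : Continuous j₁)
    (hi₀ : Function.Injective j₀) (hi₁ : Function.Injective j₁)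
    (x : ℕ → V) (hx : ∀ i, x i ∈ LinearMap.range j₀ ⊔ LinearMap.range j₁)
    (hfin : Set.Finite {i | x i ≠ 0}) (t : ℝ) (ht : 0 < t) :
    Kl1linf j₀ j₁ t x = KsupSum j₀ j₁ t x :=
  Kl1linf_eq_KsupSum_of_finiteSupport_general j₀ j₁ x hx hfin t ht
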